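/- Let 𝓗 : ℝ² → ℝ be positive, positively 2-homogeneous and C¹, with half-period τ₊ = ∫₀^π dθ/(2𝓗(cos θ, sin θ)). If z : [a,b] → ℝ² \ {0} solves Jż = α(t)∇𝓗₁(z) + (1-α(t))∇𝓗₂(z) with 0 ≤ α ≤ 1 and performs exactly m half-rotations around the origin on [a,b] (i.e., θ(a) - θ(b) = mπ), then m τ_{2+} ≤ b - a ≤ m τ_{1+}, where τ_{i+} = ∫₀^π dθ/(2𝓗ᵢ(cos θ, sin θ)). -/

import Mathlib

/-!
Along a solution the polar angle satisfies `-θ' = 2 (α H₁(uc θ) + (1 - α) H₂(uc θ))`: pair the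
equation with `J z` and use Euler's identity `⟪∇H(z), z⟫ = 2 H(z)`. Since `H₁ ≤ H₂` this gives
`2 H₁(uc θ) ≤ -θ' ≤ 2 H₂(uc θ)`, so `t ↦ ∫₀^{θ t} ds / (2 Hᵢ(uc s)) + t` is monotone for one `i`
and antitone for the other. Evenness of `Hᵢ` makes the integrand `π`-periodic, so over the
`m` half-turns from `θ b` to `θ a` the integral is `m τᵢ₊`.
-/

open MeasureTheory

/-- The standard symplectic matrix `J` acting on ℝ². -/
noncomputable def Jmap (w : EuclideanSpace ℝ (Fin 2)) : EuclideanSpace ℝ (Fin 2) :=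
  (WithLp.equiv 2 (Fin 2 → ℝ)).symm ![-(w 1), w 0]

/-- The unit-circle parametrization `θ ↦ (cos θ, sin θ)`. -/
noncomputable def uc (θ : ℝ) : EuclideanSpace ℝ (Fin 2) :=
  (WithLp.equiv 2 (Fin 2 → ℝ)).symm ![Real.cos θ, Real.sin θ]

open Real Set Filter Topology
open scoped RealInnerProductSpace

local notation "E²" => EuclideanSpace ℝ (Fin 2)

@[simp] lemma uc_apply_zero (s : ℝ) : uc s 0 = cos s := rfl
@[simp] lemma uc_apply_one (s : ℝ) : uc s 1 = sin s := rfl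
@[simp] lemma Jmap_apply_zero (w : E²) : Jmap w 0 = -w 1 := rfl
@[simp] lemma Jmap_apply_one (w : E²) : Jmap w 1 = w 0 := rfl

lemma ext_fin_two {v w : E²} (h₀ : v 0 = w 0) (h₁ : v 1 = w 1) : v = w := by
  ext i; fin_cases i <;> assumption

lemma inner_fin_two (v w : E²) : ⟪v, w⟫ = v 0 * w 0 + v 1 * w 1 := by
  simp [PiLp.inner_apply, Fin.sum_univ_two, mul_comm]

lemma Jmap_smul (c : ℝ) (v : E²) : Jmap (c • v) = c • Jmap v :=
  ext_fin_two (by simp) (by simp)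

lemma inner_Jmap_right (v w : E²) : ⟪v, Jmap w⟫ = -⟪Jmap v, w⟫ := by
  simp [inner_fin_two]

lemma Jmap_uc (s : ℝ) : Jmap (uc s) = uc (s + π / 2) :=
  ext_fin_two (by simp [cos_add_pi_div_two]) (by simp [sin_add_pi_div_two])

lemma uc_add_pi (s : ℝ) : uc (s + π) = -uc s :=
  ext_fin_two (by simp [cos_add_pi]) (by simp [sin_add_pi])

lemma inner_uc_self (s : ℝ) : ⟪uc s, uc s⟫ = 1 := by
  simp only [inner_fin_two, uc_apply_zero, uc_apply_one, ← sq, cos_sq_add_sin_sq]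

lemma inner_uc_Jmap_uc (s : ℝ) : ⟪uc s, Jmap (uc s)⟫ = 0 := by
  simp [inner_fin_two]; ring

lemma uc_ne_zero (s : ℝ) : uc s ≠ 0 := fun h => by
  simpa [h] using inner_uc_self s

lemma hasDerivAt_uc (s : ℝ) : HasDerivAt uc (Jmap (uc s)) s := by
  have h : HasDerivAt (fun t => ![cos t, sin t]) ![-sin s, cos s] s := by
    rw [hasDerivAt_pi]
    intro i
    fin_cases i
    · simpa using hasDerivAt_cos s
    · simpa using hasDerivAt_sin s
  exact ((PiLp.continuousLinearEquiv 2 ℝ (fun _ : Fin 2 => ℝ)).symm :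
    (Fin 2 → ℝ) →L[ℝ] E²).hasFDerivAt.comp_hasDerivAt s h

lemma continuous_uc : Continuous uc :=
  continuous_iff_continuousAt.2 fun s => (hasDerivAt_uc s).continuousAt

/-- Euler's identity: differentiate `λ ↦ H (λ • w)` at `λ = 1`. -/
lemma fderiv_apply_self_eq_two_mul {E : Type*} [NormedAddCommGroup E] [NormedSpace ℝ E]
    {H : E → ℝ} {w : E} (hd : DifferentiableAt ℝ H w)
    (hhom : ∀ lam : ℝ, 0 < lam → H (lam • w) = lam ^ 2 * H w) :
    fderiv ℝ H w w = 2 * H w := by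
  have hray : HasDerivAt (fun lam : ℝ => H (lam • w)) (fderiv ℝ H w w) 1 := by
    have hline : HasDerivAt (fun lam : ℝ => lam • w) w 1 := by
      simpa using (hasDerivAt_id (1 : ℝ)).smul_const w
    exact hd.hasFDerivAt.comp_hasDerivAt_of_eq (1 : ℝ) hline (one_smul ℝ w).symm
  have hpar : HasDerivAt (fun lam : ℝ => lam ^ 2 * H w) (2 * H w) 1 := by
    simpa using (hasDerivAt_pow 2 (1 : ℝ)).mul_const (H w)
  refine hray.unique (hpar.congr_of_eventuallyEq ?_)
  filter_upwards [eventually_gt_nhds one_pos] with lam hlam using hhom lam hlam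

/-- Differentiating `⟪z, J (uc θ)⟫ = 0` avoids any regularity assumption on `ρ`. -/
lemma inner_deriv_Jmap_eq_of_polar {z : ℝ → E²} {z' : E²} {ρ θ : ℝ → ℝ} {θ' t : ℝ}
    (hz : HasDerivAt z z' t) (hθ : HasDerivAt θ θ' t)
    (hpolar : ∀ᶠ s in 𝓝 t, z s = ρ s • uc (θ s)) :
    ⟪z', Jmap (z t)⟫ = ρ t ^ 2 * θ' := by
  have hnormal : HasDerivAt (fun s => Jmap (uc (θ s))) (-θ' • uc (θ t)) t := by
    have := (hasDerivAt_uc (θ t + π / 2)).scomp t (hθ.add_const (π / 2))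
    simp only [Jmap_uc, add_assoc, add_halves, uc_add_pi, smul_neg, ← neg_smul] at this ⊢
    exact this
  have hzero : HasDerivAt (fun s => ⟪z s, Jmap (uc (θ s))⟫) 0 t := by
    refine (hasDerivAt_const t (0 : ℝ)).congr_of_eventuallyEq ?_
    filter_upwards [hpolar] with s hs
    rw [hs, real_inner_smul_left, inner_uc_Jmap_uc, mul_zero]
  have h := (hz.inner ℝ hnormal).unique hzero
  rw [hpolar.self_of_nhds, real_inner_smul_left, real_inner_smul_right, inner_uc_self] at h
  rw [hpolar.self_of_nhds, Jmap_smul, real_inner_smul_right]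
  linear_combination ρ t * h

lemma inner_Jmap_eq_of_hamiltonian {H₁ H₂ : E² → ℝ} {w v : E²} {α : ℝ}
    (hd₁ : DifferentiableAt ℝ H₁ w) (hd₂ : DifferentiableAt ℝ H₂ w)
    (hhom₁ : ∀ lam : ℝ, 0 < lam → H₁ (lam • w) = lam ^ 2 * H₁ w)
    (hhom₂ : ∀ lam : ℝ, 0 < lam → H₂ (lam • w) = lam ^ 2 * H₂ w)
    (hODE : Jmap v = α • gradient H₁ w + (1 - α) • gradient H₂ w) :
    ⟪v, Jmap w⟫ = -(2 * (α * H₁ w + (1 - α) * H₂ w)) := by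
  rw [inner_Jmap_right, hODE, inner_add_left, real_inner_smul_left, real_inner_smul_left,
    inner_gradient_left, inner_gradient_left, fderiv_apply_self_eq_two_mul hd₁ hhom₁,
    fderiv_apply_self_eq_two_mul hd₂ hhom₂]
  ring

lemma neg_deriv_angle_eq {H₁ H₂ : E² → ℝ} {z : ℝ → E²} {z' : E²} {ρ θ : ℝ → ℝ} {θ' t α : ℝ}
    (hd₁ : Differentiable ℝ H₁) (hd₂ : Differentiable ℝ H₂)
    (hhom₁ : ∀ w : E², w ≠ 0 → ∀ lam : ℝ, 0 < lam → H₁ (lam • w) = lam ^ 2 * H₁ w)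
    (hhom₂ : ∀ w : E², w ≠ 0 → ∀ lam : ℝ, 0 < lam → H₂ (lam • w) = lam ^ 2 * H₂ w)
    (hz : HasDerivAt z z' t) (hθ : HasDerivAt θ θ' t) (hρ : 0 < ρ t)
    (hpolar : ∀ᶠ s in 𝓝 t, z s = ρ s • uc (θ s))
    (hODE : Jmap z' = α • gradient H₁ (z t) + (1 - α) • gradient H₂ (z t)) :
    -θ' = 2 * (α * H₁ (uc (θ t)) + (1 - α) * H₂ (uc (θ t))) := by
  have hzt : z t = ρ t • uc (θ t) := hpolar.self_of_nhds
  have hz0 : z t ≠ 0 := hzt ▸ smul_ne_zero hρ.ne' (uc_ne_zero _)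
  have h := (inner_deriv_Jmap_eq_of_polar hz hθ hpolar).symm.trans
    (inner_Jmap_eq_of_hamiltonian (hd₁ _) (hd₂ _) (hhom₁ _ hz0) (hhom₂ _ hz0) hODE)
  rw [hzt, hhom₁ _ (uc_ne_zero _) _ hρ, hhom₂ _ (uc_ne_zero _) _ hρ] at h
  have hρ2 : ρ t ^ 2 ≠ 0 := pow_ne_zero 2 hρ.ne'
  apply mul_left_cancel₀ hρ2
  linear_combination -h

/-- `t ↦ ∫₀^{θ t} f + c t` is monotone on `[a, b]`. -/
lemma integral_le_mul_sub_of_neg_deriv_mul_le {f θ θ' : ℝ → ℝ} {a b c : ℝ}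
    (hf : Continuous f) (hab : a ≤ b) (hθ : ∀ t ∈ Icc a b, HasDerivAt θ (θ' t) t)
    (h : ∀ t ∈ Ioo a b, -θ' t * f (θ t) ≤ c) :
    ∫ s in θ b..θ a, f s ≤ c * (b - a) := by
  set F : ℝ → ℝ := fun x => ∫ s in (0 : ℝ)..x, f s
  have hF : ∀ x, HasDerivAt F (f x) x := fun x =>
    (hf.integral_hasStrictDerivAt 0 x).hasDerivAt
  have hG : MonotoneOn (fun t => F (θ t) + c * t) (Icc a b) := by
    refine monotoneOn_of_hasDerivWithinAt_nonneg (convex_Icc a b)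
      (f' := fun t => f (θ t) * θ' t + c) ?_ ?_ ?_
    · exact (Continuous.comp_continuousOn (continuous_iff_continuousAt.2 fun x =>
        (hF x).continuousAt) fun t ht => (hθ t ht).continuousAt.continuousWithinAt).add
        (continuous_const.mul continuous_id).continuousOn
    · intro t ht
      rw [interior_Icc] at ht
      exact (((hF (θ t)).comp t (hθ t (Ioo_subset_Icc_self ht))).add
        ((hasDerivAt_id t).const_mul c)).hasDerivWithinAt.congr_deriv (by simp)
    · intro t ht
      rw [interior_Icc] at ht
      linarith [h t ht]
  have hmono := hG (left_mem_Icc.2 hab) (right_mem_Icc.2 hab) hab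
  rw [← intervalIntegral.integral_interval_sub_left (hf.intervalIntegrable 0 _)
    (hf.intervalIntegrable 0 _)]
  simp only at hmono
  linarith

lemma Function.Periodic.intervalIntegral_add_nat_mul_eq {f : ℝ → ℝ} {T : ℝ}
    (hf : Function.Periodic f T) (h_int : ∀ t₁ t₂, IntervalIntegrable f volume t₁ t₂)
    (m : ℕ) (c : ℝ) :
    ∫ s in c..c + m * T, f s = m * ∫ s in (0 : ℝ)..T, f s := by
  have h := hf.intervalIntegral_add_zsmul_eq (m : ℤ) c h_int
  rw [hf.intervalIntegral_add_eq c 0, zero_add] at h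
  simpa [zsmul_eq_mul] using h

/-- `τ₊` of the paper: the time a solution of `J z' = ∇H(z)` needs for half a turn. -/
noncomputable def halfPeriod (H : E² → ℝ) : ℝ :=
  ∫ s in (0 : ℝ)..π, 1 / (2 * H (uc s))

section HalfPeriod

variable {H : E² → ℝ} {θ θ' : ℝ → ℝ} {a b : ℝ} {m : ℕ}

lemma continuous_inv_two_mul_comp_uc (hH : Continuous H) (hpos : ∀ w, w ≠ 0 → 0 < H w) :
    Continuous fun s => 1 / (2 * H (uc s)) :=
  continuous_const.div (continuous_const.mul (hH.comp continuous_uc))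
    fun s => by have := hpos _ (uc_ne_zero s); positivity

lemma integral_eq_nat_mul_halfPeriod (hH : Continuous H) (hpos : ∀ w, w ≠ 0 → 0 < H w)
    (heven : ∀ w, H (-w) = H w) {x y : ℝ} (hxy : x - y = m * π) :
    ∫ s in y..x, 1 / (2 * H (uc s)) = m * halfPeriod H := by
  have hper : Function.Periodic (fun s => 1 / (2 * H (uc s))) π := fun s => by
    simp only [uc_add_pi, heven]
  rw [show x = y + m * π by linarith]
  exact hper.intervalIntegral_add_nat_mul_eq
    (fun _ _ => (continuous_inv_two_mul_comp_uc hH hpos).intervalIntegrable _ _) m y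

lemma nat_mul_halfPeriod_le_sub (hH : Continuous H) (hpos : ∀ w, w ≠ 0 → 0 < H w)
    (heven : ∀ w, H (-w) = H w) (hab : a ≤ b) (hθ : ∀ t ∈ Icc a b, HasDerivAt θ (θ' t) t)
    (hm : θ a - θ b = m * π) (hslow : ∀ t ∈ Ioo a b, -θ' t ≤ 2 * H (uc (θ t))) :
    m * halfPeriod H ≤ b - a := by
  rw [← integral_eq_nat_mul_halfPeriod hH hpos heven hm, ← one_mul (b - a)]
  refine integral_le_mul_sub_of_neg_deriv_mul_le (continuous_inv_two_mul_comp_uc hH hpos)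
    hab hθ fun t ht => ?_
  have := hpos _ (uc_ne_zero (θ t))
  rw [← mul_div_assoc, mul_one, div_le_one (by positivity)]
  exact hslow t ht

lemma sub_le_nat_mul_halfPeriod (hH : Continuous H) (hpos : ∀ w, w ≠ 0 → 0 < H w)
    (heven : ∀ w, H (-w) = H w) (hab : a ≤ b) (hθ : ∀ t ∈ Icc a b, HasDerivAt θ (θ' t) t)
    (hm : θ a - θ b = m * π) (hfast : ∀ t ∈ Ioo a b, 2 * H (uc (θ t)) ≤ -θ' t) :
    b - a ≤ m * halfPeriod H := by
  rw [← integral_eq_nat_mul_halfPeriod hH hpos heven hm, ← neg_le_neg_iff,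
    ← intervalIntegral.integral_neg, ← neg_one_mul]
  refine integral_le_mul_sub_of_neg_deriv_mul_le (continuous_inv_two_mul_comp_uc hH hpos).neg
    hab hθ fun t ht => ?_
  have := hpos _ (uc_ne_zero (θ t))
  rw [mul_neg, ← mul_div_assoc, mul_one, neg_le_neg_iff, one_le_div (by positivity)]
  exact hfast t ht

end HalfPeriod

theorem half_rotation_count_general
    (H₁ H₂ : EuclideanSpace ℝ (Fin 2) → ℝ)
    (hC1₁ : ContDiff ℝ 1 H₁) (hC1₂ : ContDiff ℝ 1 H₂)
    (hhom₁ : ∀ w : EuclideanSpace ℝ (Fin 2), w ≠ 0 → ∀ lam : ℝ, 0 < lam →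
      0 < H₁ (lam • w) ∧ H₁ (lam • w) = lam ^ 2 * H₁ w)
    (hhom₂ : ∀ w : EuclideanSpace ℝ (Fin 2), w ≠ 0 → ∀ lam : ℝ, 0 < lam →
      0 < H₂ (lam • w) ∧ H₂ (lam • w) = lam ^ 2 * H₂ w)
    (hle : ∀ w, H₁ w ≤ H₂ w)
    (heven₁ : ∀ w, H₁ (-w) = H₁ w) (heven₂ : ∀ w, H₂ (-w) = H₂ w)
    (τ1p τ2p : ℝ)
    (hτ₁ : τ1p = ∫ s in (0:ℝ)..Real.pi, 1 / (2 * H₁ (uc s)))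
    (hτ₂ : τ2p = ∫ s in (0:ℝ)..Real.pi, 1 / (2 * H₂ (uc s)))
    (a b : ℝ) (hab : a < b)
    (z z' : ℝ → EuclideanSpace ℝ (Fin 2))
    (α : ℝ → ℝ) (hα : ∀ t, α t ∈ Set.Icc (0 : ℝ) 1)
    (hz : ∀ t ∈ Set.Icc a b, HasDerivAt z (z' t) t)
    (hODE : ∀ t ∈ Set.Icc a b,
      Jmap (z' t) = α t • gradient H₁ (z t) + (1 - α t) • gradient H₂ (z t))
    (ρ θ θ' : ℝ → ℝ)
    (hρpos : ∀ t ∈ Set.Icc a b, 0 < ρ t)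
    (hpolar : ∀ t ∈ Set.Icc a b, z t = ρ t • uc (θ t))
    (hθ : ∀ t ∈ Set.Icc a b, HasDerivAt θ (θ' t) t)
    (m : ℕ) (hm : θ a - θ b = m * Real.pi) :
    m * τ2p ≤ b - a ∧ b - a ≤ m * τ1p := by
  have hpos₁ : ∀ w, w ≠ 0 → 0 < H₁ w := fun w hw => by simpa using (hhom₁ w hw 1 one_pos).1
  have hpos₂ : ∀ w, w ≠ 0 → 0 < H₂ w := fun w hw => by simpa using (hhom₂ w hw 1 one_pos).1
  have hspeed : ∀ t ∈ Ioo a b,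
      -θ' t = 2 * (α t * H₁ (uc (θ t)) + (1 - α t) * H₂ (uc (θ t))) := fun t ht =>
    have htI := Ioo_subset_Icc_self ht
    neg_deriv_angle_eq (hC1₁.differentiable one_ne_zero) (hC1₂.differentiable one_ne_zero)
      (fun w hw lam hlam => (hhom₁ w hw lam hlam).2) (fun w hw lam hlam => (hhom₂ w hw lam hlam).2)
      (hz t htI) (hθ t htI) (hρpos t htI)
      (eventually_of_mem (Icc_mem_nhds ht.1 ht.2) hpolar) (hODE t htI)
  subst hτ₁ hτ₂
  constructor
  · refine nat_mul_halfPeriod_le_sub hC1₂.continuous hpos₂ heven₂ hab.le hθ hm fun t ht => ?_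
    rw [hspeed t ht]
    nlinarith [mul_nonneg (hα t).1 (sub_nonneg.2 (hle (uc (θ t))))]
  · refine sub_le_nat_mul_halfPeriod hC1₁.continuous hpos₁ heven₁ hab.le hθ hm fun t ht => ?_
    rw [hspeed t ht]
    nlinarith [mul_nonneg (sub_nonneg.2 (hα t).2) (sub_nonneg.2 (hle (uc (θ t))))]

/-- If a solution of the convex-combination system performs exactly `m`
half-rotations on `[a,b]`, then `m τ2p ≤ b - a ≤ m τ1p`. -/
theorem half_rotation_count
    (H₁ H₂ : EuclideanSpace ℝ (Fin 2) → ℝ)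
    (hC1₁ : ContDiff ℝ 1 H₁) (hC1₂ : ContDiff ℝ 1 H₂)
    (hhom₁ : ∀ w : EuclideanSpace ℝ (Fin 2), w ≠ 0 → ∀ lam : ℝ, 0 < lam →
      0 < H₁ (lam • w) ∧ H₁ (lam • w) = lam ^ 2 * H₁ w)
    (hhom₂ : ∀ w : EuclideanSpace ℝ (Fin 2), w ≠ 0 → ∀ lam : ℝ, 0 < lam →
      0 < H₂ (lam • w) ∧ H₂ (lam • w) = lam ^ 2 * H₂ w)
    (hle : ∀ w, H₁ w ≤ H₂ w)
    (heven₁ : ∀ w, H₁ (-w) = H₁ w) (heven₂ : ∀ w, H₂ (-w) = H₂ w)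
    (τ1p τ2p : ℝ)
    (hτ₁ : τ1p = ∫ s in (0:ℝ)..Real.pi, 1 / (2 * H₁ (uc s)))
    (hτ₂ : τ2p = ∫ s in (0:ℝ)..Real.pi, 1 / (2 * H₂ (uc s)))
    (a b : ℝ) (hab : a < b)
    (z z' : ℝ → EuclideanSpace ℝ (Fin 2))
    (α : ℝ → ℝ) (hα : ∀ t, α t ∈ Set.Icc (0 : ℝ) 1)
    (hz : ∀ t ∈ Set.Icc a b, HasDerivAt z (z' t) t)
    (hz0 : ∀ t ∈ Set.Icc a b, z t ≠ 0)
    (hODE : ∀ t ∈ Set.Icc a b,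
      Jmap (z' t) = α t • gradient H₁ (z t) + (1 - α t) • gradient H₂ (z t))
    (ρ θ θ' : ℝ → ℝ)
    (hρpos : ∀ t ∈ Set.Icc a b, 0 < ρ t)
    (hpolar : ∀ t ∈ Set.Icc a b, z t = ρ t • uc (θ t))
    (hθ : ∀ t ∈ Set.Icc a b, HasDerivAt θ (θ' t) t)
    (m : ℕ) (hm : θ a - θ b = m * Real.pi) :
    m * τ2p ≤ b - a ∧ b - a ≤ m * τ1p :=
  half_rotation_count_general H₁ H₂ hC1₁ hC1₂ hhom₁ hhom₂ hle heven₁ heven₂ τ1p τ2p hτ₁ hτ₂ a b hab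
    z z' α hα hz hODE ρ θ θ' hρpos hpolar hθ m hm
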